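/- Let α₀, α₁ ∈ ℂ with 2α₀ + α₁ = 1, U ⊆ ℂ open connected, and let (x, y, z, w, q) be differentiable functions on U solving system (11). Then the function I(t) := y(t) − x(t) − 3 z(t) w(t) + (3/2) q(t)² − (3/2) t has zero derivative on U; i.e., y − x − 3zw + (3/2)q² − (3/2)t is a first integral of system (11). -/

import Mathlib

/-- `(x,y,z,w,q)` solves system (11) with parameters `α₀, α₁` on `U`:
`x' = -2xz - 3α₀`, `y' = yz + (3/2)α₁`, `z' = z² + q`,
`w' = -zw + (2/3)x + (1/3)y`, `q' = w`. -/
def SolvesSys11 (a0 a1 : ℂ) (U : Set ℂ) (x y z w q : ℂ → ℂ) : Prop :=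
  ∀ t ∈ U,
    HasDerivAt x (-2 * x t * z t - 3 * a0) t ∧
    HasDerivAt y (y t * z t + (3/2) * a1) t ∧
    HasDerivAt z (z t ^ 2 + q t) t ∧
    HasDerivAt w (-(z t) * w t + (2/3) * x t + (1/3) * y t) t ∧
    HasDerivAt q (w t) t

theorem SolvesSys11.hasDerivAt_firstIntegral {a0 a1 : ℂ} {U : Set ℂ} {x y z w q : ℂ → ℂ}
    (h : SolvesSys11 a0 a1 U x y z w q) {t : ℂ} (ht : t ∈ U) :
    HasDerivAt (fun s => y s - x s - 3 * z s * w s + (3/2) * q s ^ 2 - (3/2) * s)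
      ((3/2) * (2 * a0 + a1 - 1)) t := by
  obtain ⟨hx, hy, hz, hw, hq⟩ := h t ht
  have hI := (((hy.sub hx).sub ((hz.const_mul 3).mul hw)).add
    ((hq.pow 2).const_mul (3/2))).sub ((hasDerivAt_id t).const_mul (3/2))
  refine hI.congr_deriv ?_
  push_cast
  ring

theorem stmt9_general (a0 a1 : ℂ) (hrel : 2 * a0 + a1 = 1) (U : Set ℂ)
    (x y z w q : ℂ → ℂ) (h : SolvesSys11 a0 a1 U x y z w q) :
    ∀ t ∈ U,
      HasDerivAt (fun s => y s - x s - 3 * z s * w s + (3/2) * q s ^ 2 - (3/2) * s)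
        0 t := by
  intro t ht
  simpa [hrel] using h.hasDerivAt_firstIntegral ht

/-- The function `I = y - x - 3zw + (3/2)q² - (3/2)t` is a first
integral of system (11): it has zero derivative along any solution on the open
connected set `U`. -/
theorem stmt9 (a0 a1 : ℂ) (hrel : 2 * a0 + a1 = 1) (U : Set ℂ) (hU : IsOpen U)
    (hUconn : IsConnected U)
    (x y z w q : ℂ → ℂ) (h : SolvesSys11 a0 a1 U x y z w q) :
    ∀ t ∈ U,
      HasDerivAt (fun s => y s - x s - 3 * z s * w s + (3/2) * q s ^ 2 - (3/2) * s)
        0 t :=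
  stmt9_general a0 a1 hrel U x y z w q h
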